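/- Let α ≥ 0, d > 0, k > 0, γ > 0, h₀ > 0, T_∞ > 0, and let ν be the unique positive root of the equation h₀T_∞/(γ2^α d^{(α+1)/2}) = ν^{α+1}[M(α/2+1/2,1/2,ν²) + 2(√d h₀/k)ν M(α/2+1,3/2,ν²)]. Define c = h₀ T_∞ M(−α/2,1/2,−ν²) / [ M(−α/2,1/2,−ν²) + 2(√d h₀/k) ν M(−α/2+1/2,3/2,−ν²) ]. Then ν is the unique positive root of c/(γ2^α d^{(α+1)/2}) = λ^{α+1} M(α/2+1/2,1/2,λ²); i.e., the free-boundary coefficients of the convective problem (P1) and the flux problem (P3) coincide. -/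

import Mathlib

open Real Filter Topology

/-- The Kummer confluent hypergeometric function `M(a,b,z)`, defined by its power series. -/
noncomputable def kummerM (a b z : ℝ) : ℝ :=
  ∑' s : ℕ, ((ascPochhammer ℝ s).eval a / ((ascPochhammer ℝ s).eval b * (Nat.factorial s : ℝ)))
      * z ^ s

/-!
Kummer's transformation turns each `M(·, ·, -ν²)` in `c` into `e^{-ν²} M(·, ·, ν²)`. The factor
`e^{-ν²}` cancels, the denominator of `c` becomes the bracket in the equation for `ν`, and so
`c = γ 2^α d^{(α+1)/2} ν^{α+1} M(α/2+1/2, 1/2, ν²)`. Uniqueness holds because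
`λ ↦ λ^{α+1} M(α/2+1/2, 1/2, λ²)` is strictly increasing on `(0, ∞)`: for `a ≥ 0`, `b > 0` the
series of `M(a, b, ·)` has nonnegative coefficients.

Kummer's transformation is the Cauchy product of `e^z` with `M(b-a, b, -z)`; comparing
coefficients of `z^s` leaves the rising-factorial identity
`(a)ₛ = ∑ₘ (s choose m) (-1)^m (b-a)ₘ (b+m)ₛ₋ₘ`, proved by induction on `s` for all `b` at once.
-/

open Finset Polynomial

section Pochhammer

variable {R : Type*} [CommRing R]

theorem ascPochhammer_succ_eval_left (n : ℕ) (x : R) :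
    (ascPochhammer R (n + 1)).eval x = x * (ascPochhammer R n).eval (x + 1) := by
  simp [ascPochhammer_succ_left, eval_comp]

theorem ascPochhammer_add_eval (n m : ℕ) (x : R) :
    (ascPochhammer R (n + m)).eval x
      = (ascPochhammer R n).eval x * (ascPochhammer R m).eval (x + n) := by
  simp [← ascPochhammer_mul, eval_comp]

theorem ascPochhammer_eval_eq_sum_choose (a b : R) (s : ℕ) :
    (ascPochhammer R s).eval a = ∑ m ∈ range (s + 1), (s.choose m : R) *
      ((-1) ^ m * (ascPochhammer R m).eval (b - a) * (ascPochhammer R (s - m)).eval (b + m)) := by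
  induction s generalizing b with
  | zero => simp
  | succ s ih =>
    rw [sum_choose_succ_mul
      (fun i j => (-1) ^ i * (ascPochhammer R i).eval (b - a) * (ascPochhammer R j).eval (b + i))]
    have hfirst : ∀ i ∈ range (s + 1), (s.choose i : R) * ((-1) ^ i
        * (ascPochhammer R i).eval (b - a) * (ascPochhammer R (s + 1 - i)).eval (b + i))
        = (b + s) * ((s.choose i : R) * ((-1) ^ i * (ascPochhammer R i).eval (b - a)
          * (ascPochhammer R (s - i)).eval (b + i))) := by
      intro i hi
      have his : i ≤ s := Nat.lt_succ_iff.mp (mem_range.mp hi)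
      rw [Nat.sub_add_comm his, ascPochhammer_succ_eval, Nat.cast_sub his]
      ring
    have hsecond : ∀ i ∈ range (s + 1), (s.choose i : R) * ((-1) ^ (i + 1) *
        (ascPochhammer R (i + 1)).eval (b - a) * (ascPochhammer R (s - i)).eval (b + (i + 1 : ℕ)))
        = -(b - a) * ((s.choose i : R) * ((-1) ^ i * (ascPochhammer R i).eval (b + 1 - a)
          * (ascPochhammer R (s - i)).eval (b + 1 + i))) := by
      intro i _
      rw [ascPochhammer_succ_eval_left, sub_add_eq_add_sub, Nat.cast_succ, ← add_assoc,
        add_right_comm b]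
      ring
    rw [sum_congr rfl hfirst, sum_congr rfl hsecond, ← mul_sum, ← mul_sum, ← ih, ← ih,
      ascPochhammer_succ_eval]
    ring

theorem ascPochhammer_nonneg {S : Type*} [Semiring S] [PartialOrder S] [IsOrderedRing S]
    (n : ℕ) {x : S} (hx : 0 ≤ x) : 0 ≤ (ascPochhammer S n).eval x := by
  induction n with
  | zero => simp
  | succ n ih => rw [ascPochhammer_succ_eval]; positivity

end Pochhammer

section Kummer

noncomputable def kummerTerm (a b z : ℝ) (s : ℕ) : ℝ :=
  (ascPochhammer ℝ s).eval a / ((ascPochhammer ℝ s).eval b * (s.factorial : ℝ)) * z ^ s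

theorem kummerM_eq_tsum (a b z : ℝ) : kummerM a b z = ∑' s, kummerTerm a b z s := rfl

variable {a b z : ℝ}

theorem kummerTerm_succ (hb : 0 < b) (s : ℕ) :
    kummerTerm a b z (s + 1) = kummerTerm a b z s * ((a + s) * z / ((b + s) * (s + 1))) := by
  have := ascPochhammer_pos s b hb
  simp only [kummerTerm, ascPochhammer_succ_eval, Nat.factorial_succ, Nat.cast_mul, Nat.cast_succ]
  field_simp
  ring

theorem summable_norm_kummerTerm (hb : 0 < b) : Summable (fun s ↦ ‖kummerTerm a b z s‖) := by
  have hratio : Tendsto (fun n : ℕ ↦ (a + n) * z / ((b + n) * (n + 1))) atTop (𝓝 0) := by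
    have h1 : Tendsto (fun n : ℕ ↦ (a + 1 * n) / (b + 1 * n)) atTop (𝓝 (1 / 1)) :=
      tendsto_add_mul_div_add_mul_atTop_nhds a b 1 one_ne_zero
    have h2 : Tendsto (fun n : ℕ ↦ z / ((n + 1 : ℕ) : ℝ)) atTop (𝓝 0) :=
      (tendsto_const_div_atTop_nhds_zero_nat z).comp (tendsto_add_atTop_nat 1)
    simpa [mul_div_mul_comm] using h1.mul h2
  have hsmall : ∀ᶠ n : ℕ in atTop, ‖(a + n) * z / ((b + n) * (n + 1))‖ ≤ 1 / 2 := by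
    simpa using hratio.norm.eventually (ge_mem_nhds (by norm_num : ‖(0 : ℝ)‖ < 1 / 2))
  refine summable_of_ratio_norm_eventually_le (r := 1 / 2) (by norm_num) ?_
  filter_upwards [hsmall] with n hn
  rw [norm_norm, norm_norm, kummerTerm_succ hb, norm_mul, mul_comm (1 / 2 : ℝ)]
  exact mul_le_mul_of_nonneg_left hn (norm_nonneg _)

theorem summable_kummerTerm (hb : 0 < b) : Summable (kummerTerm a b z) :=
  (summable_norm_kummerTerm hb).of_norm

theorem sum_range_kummerTerm_mul_pow_div_factorial (hb : 0 < b) (s : ℕ) :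
    ∑ k ∈ range (s + 1), kummerTerm (b - a) b (-z) k * (z ^ (s - k) / (s - k).factorial)
      = kummerTerm a b z s := by
  have hterm : ∀ k ∈ range (s + 1),
      kummerTerm (b - a) b (-z) k * (z ^ (s - k) / (s - k).factorial)
        = (s.choose k : ℝ) * ((-1) ^ k * (ascPochhammer ℝ k).eval (b - a)
          * (ascPochhammer ℝ (s - k)).eval (b + k)) / ((ascPochhammer ℝ s).eval b * s.factorial)
          * z ^ s := by
    intro k hk
    have hks : k ≤ s := Nat.lt_succ_iff.mp (mem_range.mp hk)
    have hpoch : (ascPochhammer ℝ s).eval b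
        = (ascPochhammer ℝ k).eval b * (ascPochhammer ℝ (s - k)).eval (b + k) := by
      rw [← ascPochhammer_add_eval, Nat.add_sub_cancel' hks]
    have hfact : (s.factorial : ℝ) = s.choose k * k.factorial * (s - k).factorial := by
      exact_mod_cast (Nat.choose_mul_factorial_mul_factorial hks).symm
    have hpow : z ^ s = z ^ k * z ^ (s - k) := by rw [← pow_add, Nat.add_sub_cancel' hks]
    have := ascPochhammer_pos k b hb
    have := ascPochhammer_pos (s - k) (b + k) (by positivity)
    have := Nat.choose_pos hks
    rw [kummerTerm, hpoch, hfact, hpow, neg_pow]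
    field_simp
  rw [sum_congr rfl hterm, ← sum_mul, ← sum_div, ← ascPochhammer_eval_eq_sum_choose, kummerTerm]

theorem kummerM_eq_exp_mul (a : ℝ) {b : ℝ} (hb : 0 < b) (z : ℝ) :
    kummerM a b z = exp z * kummerM (b - a) b (-z) := by
  have hexp : Summable (fun n ↦ ‖z ^ n / n.factorial‖) := by
    simpa [abs_div] using Real.summable_pow_div_factorial |z|
  rw [mul_comm, exp_eq_exp_ℝ, NormedSpace.exp_eq_tsum_div, kummerM_eq_tsum, kummerM_eq_tsum,
    tsum_mul_tsum_eq_tsum_sum_range_of_summable_norm (summable_norm_kummerTerm hb) hexp]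
  simp only [sum_range_kummerTerm_mul_pow_div_factorial hb]

theorem one_le_kummerM (ha : 0 ≤ a) (hb : 0 < b) (hz : 0 ≤ z) : 1 ≤ kummerM a b z := by
  have hnonneg (s : ℕ) : 0 ≤ kummerTerm a b z s := by
    have := ascPochhammer_nonneg s ha
    have := ascPochhammer_pos s b hb
    unfold kummerTerm
    positivity
  calc 1 = kummerTerm a b z 0 := by simp [kummerTerm]
    _ ≤ kummerM a b z := (summable_kummerTerm hb).le_tsum 0 (fun s _ ↦ hnonneg s)

theorem monotoneOn_kummerM (ha : 0 ≤ a) (hb : 0 < b) : MonotoneOn (kummerM a b) (Set.Ici 0) := by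
  intro z hz w _ hzw
  refine (summable_kummerTerm hb).tsum_le_tsum (fun s ↦ ?_) (summable_kummerTerm hb)
  have := ascPochhammer_nonneg s ha
  have := ascPochhammer_pos s b hb
  gcongr

theorem strictMonoOn_rpow_mul_kummerM_sq {p : ℝ} (hp : 0 < p) (ha : 0 ≤ a) (hb : 0 < b) :
    StrictMonoOn (fun x ↦ x ^ p * kummerM a b (x ^ 2)) (Set.Ioi 0) := by
  intro x hx y hy hxy
  have hM : kummerM a b (x ^ 2) ≤ kummerM a b (y ^ 2) :=
    monotoneOn_kummerM ha hb (sq_nonneg x) (sq_nonneg y) (pow_le_pow_left₀ (le_of_lt hx) hxy.le 2)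
  exact mul_lt_mul (rpow_lt_rpow (le_of_lt hx) hxy hp) hM
    (one_pos.trans_le (one_le_kummerM ha hb (sq_nonneg x))) (rpow_nonneg (le_of_lt hy) p)

end Kummer

theorem P1_equiv_P3_general (α d k γ h₀ Tinf ν : ℝ)
    (hα : 0 ≤ α) (hd : 0 < d) (hγ : 0 < γ) (hh : 0 < h₀) (hT : 0 < Tinf)
    (hν : 0 < ν)
    (hνeq : h₀ * Tinf / (γ * 2 ^ α * d ^ ((α + 1) / 2))
      = ν ^ (α + 1) * (kummerM (α / 2 + 1 / 2) (1 / 2) (ν ^ 2)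
          + 2 * (Real.sqrt d * h₀ / k) * ν * kummerM (α / 2 + 1) (3 / 2) (ν ^ 2)))
    (c : ℝ)
    (hc : c = h₀ * Tinf * kummerM (-α / 2) (1 / 2) (-ν ^ 2)
      / (kummerM (-α / 2) (1 / 2) (-ν ^ 2)
          + 2 * (Real.sqrt d * h₀ / k) * ν * kummerM (-α / 2 + 1 / 2) (3 / 2) (-ν ^ 2))) :
    (c / (γ * 2 ^ α * d ^ ((α + 1) / 2))
        = ν ^ (α + 1) * kummerM (α / 2 + 1 / 2) (1 / 2) (ν ^ 2))
      ∧ ∀ l : ℝ, 0 < l →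
          c / (γ * 2 ^ α * d ^ ((α + 1) / 2))
            = l ^ (α + 1) * kummerM (α / 2 + 1 / 2) (1 / 2) (l ^ 2) → l = ν := by
  set M₁ := kummerM (α / 2 + 1 / 2) (1 / 2) (ν ^ 2)
  set M₂ := kummerM (α / 2 + 1) (3 / 2) (ν ^ 2)
  set G := γ * 2 ^ α * d ^ ((α + 1) / 2)
  set D := M₁ + 2 * (Real.sqrt d * h₀ / k) * ν * M₂
  have hM₁ : kummerM (-α / 2) (1 / 2) (-ν ^ 2) = exp (-ν ^ 2) * M₁ := by
    rw [kummerM_eq_exp_mul _ one_half_pos, neg_neg,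
      show (1 : ℝ) / 2 - -α / 2 = α / 2 + 1 / 2 by ring]
  have hM₂ : kummerM (-α / 2 + 1 / 2) (3 / 2) (-ν ^ 2) = exp (-ν ^ 2) * M₂ := by
    rw [kummerM_eq_exp_mul _ (by norm_num), neg_neg,
      show (3 : ℝ) / 2 - (-α / 2 + 1 / 2) = α / 2 + 1 by ring]
  have hG : G ≠ 0 := by positivity
  have hνeq' : h₀ * Tinf = G * (ν ^ (α + 1) * D) := by rw [← hνeq, mul_div_cancel₀ _ hG]
  have hD : D ≠ 0 := by
    rintro hD
    rw [hD, mul_zero, mul_zero] at hνeq'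
    exact (mul_pos hh hT).ne' hνeq'
  have hden : kummerM (-α / 2) (1 / 2) (-ν ^ 2)
      + 2 * (Real.sqrt d * h₀ / k) * ν * kummerM (-α / 2 + 1 / 2) (3 / 2) (-ν ^ 2)
      = exp (-ν ^ 2) * D := by
    rw [hM₁, hM₂]; ring
  have hcG : c / G = ν ^ (α + 1) * M₁ := by
    rw [hc, hden, hM₁, hνeq']
    field_simp
  exact ⟨hcG, fun l hl hl' ↦
    (strictMonoOn_rpow_mul_kummerM_sq (by linarith) (by linarith) one_half_pos).injOn
      hl hν (hl'.symm.trans hcG)⟩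

/-- the free-boundary coefficients of problems (P1) and (P3) coincide
when `c` is defined from the data of (P1). -/
theorem P1_equiv_P3 (α d k γ h₀ Tinf ν : ℝ)
    (hα : 0 ≤ α) (hd : 0 < d) (hk : 0 < k) (hγ : 0 < γ) (hh : 0 < h₀) (hT : 0 < Tinf)
    (hν : 0 < ν)
    (hνeq : h₀ * Tinf / (γ * 2 ^ α * d ^ ((α + 1) / 2))
      = ν ^ (α + 1) * (kummerM (α / 2 + 1 / 2) (1 / 2) (ν ^ 2)
          + 2 * (Real.sqrt d * h₀ / k) * ν * kummerM (α / 2 + 1) (3 / 2) (ν ^ 2)))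
    (c : ℝ)
    (hc : c = h₀ * Tinf * kummerM (-α / 2) (1 / 2) (-ν ^ 2)
      / (kummerM (-α / 2) (1 / 2) (-ν ^ 2)
          + 2 * (Real.sqrt d * h₀ / k) * ν * kummerM (-α / 2 + 1 / 2) (3 / 2) (-ν ^ 2))) :
    (c / (γ * 2 ^ α * d ^ ((α + 1) / 2))
        = ν ^ (α + 1) * kummerM (α / 2 + 1 / 2) (1 / 2) (ν ^ 2))
      ∧ ∀ l : ℝ, 0 < l →
          c / (γ * 2 ^ α * d ^ ((α + 1) / 2))
            = l ^ (α + 1) * kummerM (α / 2 + 1 / 2) (1 / 2) (l ^ 2) → l = ν :=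
  P1_equiv_P3_general α d k γ h₀ Tinf ν hα hd hγ hh hT hν hνeq c hc
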